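/- arXiv:2203.13522 — 5 statements merged into one kernel-verified Lean document; each statement's English description precedes it below -/
import Mathlib

section
/- Let A and B be positive semidefinite operators on an N-dimensional complex Hilbert space, each of rank at most r, and let 0 < α < 1. Then |tr(A^α) − tr(B^α)| ≤ 5 r ‖A − B‖^α, where ‖·‖ is the operator (spectral) norm. -/
/-!
Order the eigenvalues of `A` and `B` decreasingly. Weyl's inequality
`|λᵢ(A) - λᵢ(B)| ≤ ‖A - B‖` follows from a dimension count: the span of the top `i + 1`
eigenvectors of `A` meets the span of the bottom `N - i` eigenvectors of `B`, and on a common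
unit vector the quadratic forms of `A` and `B` are at least `λᵢ(A)` and at most `λᵢ(B)`.
Since `x ↦ x ^ α` is `α`-Hölder with constant `1` on `[0, ∞)`, each index contributes at most
`‖A - B‖ ^ α`, and only indices where `λᵢ(A)` or `λᵢ(B)` is nonzero contribute: at most `2r`
of them.
-/

open Matrix
open scoped ComplexOrder

/-- Operator (spectral) norm of a complex matrix. -/
noncomputable def opNorm {N : ℕ} (M : Matrix (Fin N) (Fin N) ℂ) : ℝ :=
  ‖Matrix.toEuclideanCLM (𝕜 := ℂ) M‖

open Finset
open scoped InnerProductSpace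

theorem Real.abs_rpow_sub_rpow_le_abs_sub_rpow {x y p : ℝ} (hx : 0 ≤ x) (hy : 0 ≤ y)
    (hp : 0 ≤ p) (hp1 : p ≤ 1) : |x ^ p - y ^ p| ≤ |x - y| ^ p := by
  wlog hyx : y ≤ x generalizing x y
  · rw [abs_sub_comm, abs_sub_comm x]
    exact this hy hx (le_of_not_ge hyx)
  have hsub : x ^ p ≤ (x - y) ^ p + y ^ p := by
    simpa using Real.rpow_add_le_add_rpow (sub_nonneg.2 hyx) hy hp hp1
  rw [abs_of_nonneg (sub_nonneg.2 (Real.rpow_le_rpow hy hyx hp)),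
    abs_of_nonneg (sub_nonneg.2 hyx)]
  linarith

theorem abs_sum_rpow_sub_sum_rpow_le {ι : Type*} [Fintype ι] {x y : ι → ℝ} (hx : 0 ≤ x)
    (hy : 0 ≤ y) {ε p : ℝ} (hε : 0 ≤ ε) (hxy : ∀ i, |x i - y i| ≤ ε) (hp : 0 < p)
    (hp1 : p ≤ 1) :
    |∑ i, x i ^ p - ∑ i, y i ^ p| ≤
      (#{i | x i ≠ 0} + #{i | y i ≠ 0} : ℕ) * ε ^ p := by
  classical
  set S : Finset ι := {i | x i ≠ 0 ∨ y i ≠ 0}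
  have hS : ∑ i ∈ S, (x i ^ p - y i ^ p) = ∑ i, (x i ^ p - y i ^ p) := by
    refine Finset.sum_subset (Finset.subset_univ S) fun i _ hi => ?_
    obtain ⟨hxi, hyi⟩ : x i = 0 ∧ y i = 0 := by simpa [S, not_or] using hi
    simp [hxi, hyi, Real.zero_rpow hp.ne']
  have hcard : #S ≤ #{i | x i ≠ 0} + #{i | y i ≠ 0} := by
    simpa only [S, Finset.filter_or] using Finset.card_union_le _ _
  calc |∑ i, x i ^ p - ∑ i, y i ^ p| = |∑ i ∈ S, (x i ^ p - y i ^ p)| := by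
        rw [hS, Finset.sum_sub_distrib]
    _ ≤ ∑ i ∈ S, |x i - y i| ^ p := Finset.abs_sum_le_sum_abs _ _ |>.trans <|
        Finset.sum_le_sum fun i _ =>
          Real.abs_rpow_sub_rpow_le_abs_sub_rpow (hx i) (hy i) hp.le hp1
    _ ≤ ∑ _i ∈ S, ε ^ p := Finset.sum_le_sum fun i _ =>
        Real.rpow_le_rpow (abs_nonneg _) (hxy i) hp.le
    _ ≤ _ := by
        rw [Finset.sum_const, nsmul_eq_mul]
        gcongr

namespace OrthonormalBasis

variable {ι 𝕜 E : Type*} [Fintype ι] [RCLike 𝕜] [NormedAddCommGroup E] [InnerProductSpace 𝕜 E]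
  (b : OrthonormalBasis ι 𝕜 E)

theorem norm_sq_eq_sum_norm_sq_repr (v : E) : ‖v‖ ^ 2 = ∑ i, ‖b.repr v i‖ ^ 2 := by
  rw [← b.repr.norm_map, EuclideanSpace.norm_sq_eq]

theorem repr_apply_eq_zero_of_mem_span {s : Set ι} {v : E}
    (hv : v ∈ Submodule.span 𝕜 (b '' s)) {i : ι} (hi : i ∉ s) : b.repr v i = 0 := by
  classical
  induction hv using Submodule.span_induction with
  | mem x hx =>
    obtain ⟨j, hj, rfl⟩ := hx
    rw [b.repr_self, PiLp.single_apply, if_neg]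
    rintro rfl
    exact hi hj
  | zero => simp
  | add x y _ _ hx hy => simp [hx, hy]
  | smul a x _ hx => simp [hx]

theorem finrank_span_image (s : Finset ι) :
    Module.finrank 𝕜 (Submodule.span 𝕜 (b '' s)) = #s := by
  classical
  rw [← Finset.coe_image,
    Module.finrank_eq_card_basis (OrthonormalBasis.span b.orthonormal s).toBasis, Fintype.card_coe]

end OrthonormalBasis

theorem Submodule.exists_mem_inf_ne_zero_of_finrank_lt {K V : Type*} [DivisionRing K]
    [AddCommGroup V] [Module K V] [FiniteDimensional K V] (W₁ W₂ : Submodule K V)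
    (h : Module.finrank K V < Module.finrank K W₁ + Module.finrank K W₂) :
    ∃ v ∈ W₁ ⊓ W₂, v ≠ 0 := by
  refine Submodule.exists_mem_ne_zero_of_ne_bot fun hbot => ?_
  have := Submodule.finrank_sup_add_finrank_inf_eq W₁ W₂
  rw [hbot, finrank_bot, add_zero] at this
  have := Submodule.finrank_le (W₁ ⊔ W₂)
  omega

namespace LinearMap.IsSymmetric

variable {𝕜 E : Type*} [RCLike 𝕜] [NormedAddCommGroup E] [InnerProductSpace 𝕜 E]
  [FiniteDimensional 𝕜 E] {T : E →ₗ[𝕜] E} (hT : T.IsSymmetric) {n : ℕ}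
  (hn : Module.finrank 𝕜 E = n)

theorem re_inner_apply_self_eq_sum (v : E) :
    RCLike.re ⟪T v, v⟫_𝕜 =
      ∑ i, hT.eigenvalues hn i * ‖(hT.eigenvectorBasis hn).repr v i‖ ^ 2 := by
  rw [← (hT.eigenvectorBasis hn).repr.inner_map_map, PiLp.inner_apply, map_sum]
  refine Finset.sum_congr rfl fun i _ => ?_
  rw [eigenvectorBasis_apply_self_apply, RCLike.inner_apply, map_mul (starRingEnd 𝕜),
    RCLike.conj_ofReal, mul_left_comm, RCLike.mul_conj, ← RCLike.ofReal_pow,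
    ← RCLike.ofReal_mul, RCLike.ofReal_re]

theorem mul_norm_sq_le_re_inner_apply_self {s : Set (Fin n)} {t : ℝ}
    (ht : ∀ j ∈ s, t ≤ hT.eigenvalues hn j) {v : E}
    (hv : v ∈ Submodule.span 𝕜 (hT.eigenvectorBasis hn '' s)) :
    t * ‖v‖ ^ 2 ≤ RCLike.re ⟪T v, v⟫_𝕜 := by
  rw [hT.re_inner_apply_self_eq_sum hn, (hT.eigenvectorBasis hn).norm_sq_eq_sum_norm_sq_repr,
    Finset.mul_sum]
  refine Finset.sum_le_sum fun i _ => ?_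
  by_cases hi : i ∈ s
  · exact mul_le_mul_of_nonneg_right (ht i hi) (sq_nonneg _)
  · simp [(hT.eigenvectorBasis hn).repr_apply_eq_zero_of_mem_span hv hi]

theorem re_inner_apply_self_le_mul_norm_sq {s : Set (Fin n)} {t : ℝ}
    (ht : ∀ j ∈ s, hT.eigenvalues hn j ≤ t) {v : E}
    (hv : v ∈ Submodule.span 𝕜 (hT.eigenvectorBasis hn '' s)) :
    RCLike.re ⟪T v, v⟫_𝕜 ≤ t * ‖v‖ ^ 2 := by
  rw [hT.re_inner_apply_self_eq_sum hn, (hT.eigenvectorBasis hn).norm_sq_eq_sum_norm_sq_repr,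
    Finset.mul_sum]
  refine Finset.sum_le_sum fun i _ => ?_
  by_cases hi : i ∈ s
  · exact mul_le_mul_of_nonneg_right (ht i hi) (sq_nonneg _)
  · simp [(hT.eigenvectorBasis hn).repr_apply_eq_zero_of_mem_span hv hi]

theorem eigenvalues_le_eigenvalues_add {S : E →ₗ[𝕜] E} (hS : S.IsSymmetric) {c : ℝ}
    (hTS : ∀ v, RCLike.re ⟪T v, v⟫_𝕜 ≤ RCLike.re ⟪S v, v⟫_𝕜 + c * ‖v‖ ^ 2) (i : Fin n) :
    hT.eigenvalues hn i ≤ hS.eigenvalues hn i + c := by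
  obtain ⟨v, ⟨hvT, hvS⟩, hv⟩ := Submodule.exists_mem_inf_ne_zero_of_finrank_lt
    (Submodule.span 𝕜 (hT.eigenvectorBasis hn '' ↑(Iic i)))
    (Submodule.span 𝕜 (hS.eigenvectorBasis hn '' ↑(Ici i))) (by
      rw [OrthonormalBasis.finrank_span_image, OrthonormalBasis.finrank_span_image, Fin.card_Iic,
        Fin.card_Ici, hn]
      omega)
  have hT_ge := hT.mul_norm_sq_le_re_inner_apply_self hn
    (fun j hj => hT.eigenvalues_antitone hn (Finset.mem_Iic.1 hj)) hvT
  have hS_le := hS.re_inner_apply_self_le_mul_norm_sq hn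
    (fun j hj => hS.eigenvalues_antitone hn (Finset.mem_Ici.1 hj)) hvS
  exact le_of_mul_le_mul_right (by linarith [hTS v]) (by positivity : 0 < ‖v‖ ^ 2)

end LinearMap.IsSymmetric

theorem ContinuousLinearMap.re_inner_apply_self_le {𝕜 E : Type*} [RCLike 𝕜]
    [NormedAddCommGroup E] [InnerProductSpace 𝕜 E] (T : E →L[𝕜] E) (v : E) :
    RCLike.re ⟪T v, v⟫_𝕜 ≤ ‖T‖ * ‖v‖ ^ 2 :=
  calc RCLike.re ⟪T v, v⟫_𝕜 ≤ ‖T v‖ * ‖v‖ := re_inner_le_norm _ _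
    _ ≤ ‖T‖ * ‖v‖ * ‖v‖ := by gcongr; exact T.le_opNorm v
    _ = ‖T‖ * ‖v‖ ^ 2 := by ring

theorem opNorm_nonneg {N : ℕ} (M : Matrix (Fin N) (Fin N) ℂ) : 0 ≤ opNorm M :=
  norm_nonneg _

theorem opNorm_sub_comm {N : ℕ} (A B : Matrix (Fin N) (Fin N) ℂ) :
    opNorm (A - B) = opNorm (B - A) := by
  rw [opNorm, opNorm, ← neg_sub, map_neg, norm_neg]

namespace Matrix.IsHermitian

variable {N : ℕ} {A B : Matrix (Fin N) (Fin N) ℂ}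

theorem eigenvalues₀_le_add_opNorm (hA : A.IsHermitian) (hB : B.IsHermitian)
    (i : Fin (Fintype.card (Fin N))) :
    hA.eigenvalues₀ i ≤ hB.eigenvalues₀ i + opNorm (A - B) := by
  refine LinearMap.IsSymmetric.eigenvalues_le_eigenvalues_add _ _ _ (fun v => ?_) i
  have := (toEuclideanCLM (𝕜 := ℂ) (A - B)).re_inner_apply_self_le v
  rw [← sub_le_iff_le_add', ← map_sub, ← inner_sub_left, ← LinearMap.sub_apply, ← map_sub]
  exact this

theorem abs_eigenvalues₀_sub_le_opNorm (hA : A.IsHermitian) (hB : B.IsHermitian)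
    (i : Fin (Fintype.card (Fin N))) :
    |hA.eigenvalues₀ i - hB.eigenvalues₀ i| ≤ opNorm (A - B) := by
  have := hB.eigenvalues₀_le_add_opNorm hA i
  rw [opNorm_sub_comm] at this
  exact abs_sub_le_iff.2 ⟨by linarith [hA.eigenvalues₀_le_add_opNorm hB i], by linarith⟩

theorem re_trace_cfc (hA : A.IsHermitian) (f : ℝ → ℝ) :
    (hA.cfc f).trace.re = ∑ i, f (hA.eigenvalues₀ i) := by
  have : (hA.cfc f).trace = ∑ i, (f (hA.eigenvalues i) : ℂ) := by
    rw [Matrix.IsHermitian.cfc, Unitary.conjStarAlgAut_apply, Matrix.trace_mul_cycle,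
      (Matrix.mem_unitaryGroup_iff').mp (hA.eigenvectorUnitary).2, Matrix.one_mul,
      Matrix.trace_diagonal]
    rfl
  rw [this, Complex.re_sum]
  simp only [Complex.ofReal_re, eigenvalues]
  exact Equiv.sum_comp _ (fun j => f (hA.eigenvalues₀ j))

theorem rank_eq_card_eigenvalues₀_ne_zero (hA : A.IsHermitian) :
    A.rank = #{i | hA.eigenvalues₀ i ≠ 0} := by
  rw [hA.rank_eq_card_non_zero_eigs, ← Fintype.card_subtype]
  exact Fintype.card_congr ((Fintype.equivOfCardEq (Fintype.card_fin _)).symm.subtypeEquiv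
    fun _ => Iff.rfl)

theorem _root_.Matrix.PosSemidef.eigenvalues₀_nonneg (hA : A.PosSemidef) :
    0 ≤ hA.1.eigenvalues₀ := fun j => by
  simpa [eigenvalues] using hA.eigenvalues_nonneg (Fintype.equivOfCardEq (Fintype.card_fin _) j)

end Matrix.IsHermitian

/-- If `A, B` are positive semidefinite of rank at most `r` and `0 < α < 1`, then
`|tr(A^α) − tr(B^α)| ≤ 5 r ‖A − B‖^α`. -/
theorem abs_trace_rpow_sub_trace_rpow_le {N r : ℕ} {A B : Matrix (Fin N) (Fin N) ℂ}
    (hA : A.PosSemidef) (hB : B.PosSemidef)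
    (hrA : A.rank ≤ r) (hrB : B.rank ≤ r) {α : ℝ} (h0 : 0 < α) (h1 : α < 1) :
    |((hA.1.cfc (fun x => x ^ α)).trace).re - ((hB.1.cfc (fun x => x ^ α)).trace).re| ≤
      5 * r * opNorm (A - B) ^ α := by
  have hε : 0 ≤ opNorm (A - B) ^ α := Real.rpow_nonneg (opNorm_nonneg _) α
  rw [hA.1.re_trace_cfc, hB.1.re_trace_cfc]
  calc _ ≤ (#{i | hA.1.eigenvalues₀ i ≠ 0} + #{i | hB.1.eigenvalues₀ i ≠ 0} : ℕ) *
        opNorm (A - B) ^ α :=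
        abs_sum_rpow_sub_sum_rpow_le hA.eigenvalues₀_nonneg hB.eigenvalues₀_nonneg
          (opNorm_nonneg _) (hA.1.abs_eigenvalues₀_sub_le_opNorm hB.1) h0 h1.le
    _ ≤ (r + r : ℕ) * opNorm (A - B) ^ α := by
        rw [← hA.1.rank_eq_card_eigenvalues₀_ne_zero, ← hB.1.rank_eq_card_eigenvalues₀_ne_zero]
        gcongr
    _ ≤ 5 * r * opNorm (A - B) ^ α := by
        gcongr
        push_cast
        linarith [(Nat.cast_nonneg r : (0 : ℝ) ≤ r)]
end

section
/- Let ρ and σ be density operators on an N-dimensional Hilbert space, let μ = (ρ+σ)/2 with spectral decomposition μ = Σ_j λ_j |ψ_j⟩⟨ψ_j|. Then for every eigenvector ψ_j of μ with eigenvalue λ_j, ‖(ρ − σ) ψ_j‖ ≤ 2√λ_j. -/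
open Matrix
open scoped ComplexOrder

/-- Euclidean norm of a vector in `ℂ^N`. -/
noncomputable def eNorm {N : ℕ} (v : Fin N → ℂ) : ℝ :=
  ‖(WithLp.equiv 2 (Fin N → ℂ)).symm v‖

/-!
By the parallelogram law, `‖(ρ - σ)ψ‖² = 2‖ρψ‖² + 2‖σψ‖² - ‖(ρ + σ)ψ‖²`. A density matrix
satisfies `0 ≤ ρ ≤ 1`, hence `ρ² ≤ ρ` and `‖ρψ‖² ≤ ⟨ψ, ρψ⟩`. Since `(ρ + σ)ψ = 2λψ`, the right-hand
side is at most `2⟨ψ, (ρ + σ)ψ⟩ - 4λ² = 4λ - 4λ² ≤ 4λ`.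
-/

open scoped MatrixOrder

namespace Matrix

variable {𝕜 n : Type*} [RCLike 𝕜] [Fintype n] {A : Matrix n n 𝕜}

lemma PosSemidef.le_one_of_trace_eq_one [DecidableEq n] (hA : A.PosSemidef) (h : A.trace = 1) :
    A ≤ 1 := by
  rw [CFC.le_one_iff (R := ℝ) A hA.1.isSelfAdjoint, hA.1.spectrum_real_eq_range_eigenvalues]
  rintro _ ⟨i, rfl⟩
  have hsum : ∑ j, hA.1.eigenvalues j = 1 := by
    exact_mod_cast hA.1.trace_eq_sum_eigenvalues.symm.trans h
  exact hsum ▸ Finset.single_le_sum (fun j _ => hA.eigenvalues_nonneg j) (Finset.mem_univ i)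

lemma IsHermitian.re_star_mulVec_dotProduct_mulVec_le (hA : A.IsHermitian) (hAA : A * A ≤ A)
    (v : n → 𝕜) :
    RCLike.re (star (A *ᵥ v) ⬝ᵥ (A *ᵥ v)) ≤ RCLike.re (star v ⬝ᵥ (A *ᵥ v)) := by
  have h := (le_iff.mp hAA).re_dotProduct_nonneg v
  rw [sub_mulVec, dotProduct_sub, map_sub, sub_nonneg] at h
  rwa [star_mulVec, ← dotProduct_mulVec, mulVec_mulVec, hA.eq]

end Matrix

section

variable {N : ℕ}

lemma eNorm_sq (v : Fin N → ℂ) : eNorm v ^ 2 = (star v ⬝ᵥ v).re := by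
  rw [eNorm, ← inner_self_eq_norm_sq (𝕜 := ℂ), EuclideanSpace.inner_eq_star_dotProduct,
    dotProduct_comm]
  simp

lemma eNorm_add_sq_add_eNorm_sub_sq (v w : Fin N → ℂ) :
    eNorm (v + w) ^ 2 + eNorm (v - w) ^ 2 = 2 * (eNorm v ^ 2 + eNorm w ^ 2) := by
  simpa [eNorm] using parallelogram_law_with_norm ℂ (WithLp.toLp 2 v) (WithLp.toLp 2 w)

lemma eNorm_smul (c : ℂ) (v : Fin N → ℂ) : eNorm (c • v) = ‖c‖ * eNorm v := by
  simp [eNorm, norm_smul]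

open scoped Matrix.Norms.L2Operator in
lemma eNorm_mulVec_sq_le_of_trace_eq_one {ρ : Matrix (Fin N) (Fin N) ℂ} (hρ : ρ.PosSemidef)
    (hρ1 : ρ.trace = 1) (v : Fin N → ℂ) :
    eNorm (ρ *ᵥ v) ^ 2 ≤ (star v ⬝ᵥ (ρ *ᵥ v)).re := by
  have hsq : ρ * ρ ≤ ρ := by
    simpa [sq] using CStarAlgebra.pow_antitone hρ.nonneg (hρ.le_one_of_trace_eq_one hρ1)
      (by norm_num : 1 ≤ 2)
  rw [eNorm_sq]
  exact hρ.1.re_star_mulVec_dotProduct_mulVec_le hsq v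

end

/-- If `ρ, σ` are density operators and `ψ` is a unit eigenvector of `μ = (ρ+σ)/2` with
eigenvalue `λ`, then `‖(ρ − σ) ψ‖ ≤ 2 √λ`. -/
theorem norm_sub_mulVec_eigenvector_le {N : ℕ} {ρ σ : Matrix (Fin N) (Fin N) ℂ}
    (hρ : ρ.PosSemidef) (hσ : σ.PosSemidef)
    (hρ1 : ρ.trace = 1) (hσ1 : σ.trace = 1)
    (ψ : Fin N → ℂ) (hψ : eNorm ψ = 1) (lam : ℝ)
    (heig : ((1/2 : ℂ) • (ρ + σ)).mulVec ψ = (lam : ℂ) • ψ) :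
    eNorm ((ρ - σ).mulVec ψ) ≤ 2 * Real.sqrt lam := by
  have hsum : ρ *ᵥ ψ + σ *ᵥ ψ = ((2 * lam : ℝ) : ℂ) • ψ := by
    rw [← add_mulVec, Complex.ofReal_mul, Complex.ofReal_ofNat, mul_smul, ← heig, smul_mulVec,
      smul_smul]
    norm_num
  have hquad : (star ψ ⬝ᵥ (ρ *ᵥ ψ)).re + (star ψ ⬝ᵥ (σ *ᵥ ψ)).re = 2 * lam := by
    rw [← Complex.add_re, ← dotProduct_add, hsum, dotProduct_smul, smul_eq_mul,
      Complex.re_ofReal_mul, ← eNorm_sq, hψ]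
    ring
  have hnorm_sum : eNorm (ρ *ᵥ ψ + σ *ᵥ ψ) ^ 2 = 4 * lam ^ 2 := by
    rw [hsum, eNorm_smul, hψ, Complex.norm_real, Real.norm_eq_abs, mul_one, sq_abs]
    ring
  have hpar := eNorm_add_sq_add_eNorm_sub_sq (ρ *ᵥ ψ) (σ *ᵥ ψ)
  have hρψ := eNorm_mulVec_sq_le_of_trace_eq_one hρ hρ1 ψ
  have hσψ := eNorm_mulVec_sq_le_of_trace_eq_one hσ hσ1 ψ
  have hsq : eNorm ((ρ - σ) *ᵥ ψ) ^ 2 ≤ (2 : ℝ) ^ 2 * lam := by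
    rw [sub_mulVec]
    linarith [sq_nonneg lam]
  calc eNorm ((ρ - σ) *ᵥ ψ) ≤ Real.sqrt ((2 : ℝ) ^ 2 * lam) :=
        Real.le_sqrt_of_sq_le hsq
    _ = 2 * Real.sqrt lam := by
        rw [Real.sqrt_mul (by norm_num), Real.sqrt_sq (by norm_num)]
end

section
/- Let ρ and σ be density operators of rank at most r on a finite-dimensional Hilbert space. Let ν = (ρ−σ)/2, μ = (ρ+σ)/2, let Π denote the orthogonal projection onto the support of μ, and let Π_δ denote the orthogonal projection onto the span of eigenvectors of μ with eigenvalue exceeding δ > 0. Then for every α ≥ 1, tr((Π − Π_δ)|ν|^α) ≤ 2 r √δ. -/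
/-!
Write `Π - Π_δ = P := 𝟙_(0, δ](μ)`, so that `P μ P ≤ δ`, and expand
`tr(P |ν|^α) = ∑ᵢ |λᵢ|^α ⟨vᵢ, P vᵢ⟩` over an eigenbasis `(λᵢ, vᵢ)` of `ν`.
Since `μ + ν = ρ` and `μ - ν = σ` are positive, Cauchy–Schwarz for both forms gives
`|⟨x, ν y⟩| ≤ ⟨x, μ x⟩^½ ⟨y, μ y⟩^½`. For `x = y = vᵢ` this gives `|λᵢ| ≤ ⟨vᵢ, μ vᵢ⟩ ≤ tr μ = 1`,
hence `|λᵢ|^α ≤ |λᵢ|`; for `x = P vᵢ, y = vᵢ` it bounds `|λᵢ| ⟨vᵢ, P vᵢ⟩ = |⟨P vᵢ, ν vᵢ⟩|` by `√δ`.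
Only the `rank ν ≤ 2r` indices with `λᵢ ≠ 0` contribute.
-/

open Matrix
open scoped ComplexOrder

/-- `|A|^α` for a Hermitian matrix `A`, defined spectrally. -/
noncomputable def absPow {N : ℕ} {A : Matrix (Fin N) (Fin N) ℂ}
    (hA : A.IsHermitian) (α : ℝ) : Matrix (Fin N) (Fin N) ℂ :=
  hA.cfc (fun x => |x| ^ α)

/-- Projection onto the span of eigenvectors of the Hermitian `A` with eigenvalue `> δ`. -/
noncomputable def suppProj {N : ℕ} {A : Matrix (Fin N) (Fin N) ℂ}
    (hA : A.IsHermitian) (δ : ℝ) : Matrix (Fin N) (Fin N) ℂ :=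
  hA.cfc (fun x => if δ < x then 1 else 0)

open scoped MatrixOrder

theorem Real.sqrt_mul_sqrt_add_sqrt_mul_sqrt_le {a₁ a₂ b₁ b₂ : ℝ} (ha₁ : 0 ≤ a₁) (ha₂ : 0 ≤ a₂)
    (hb₁ : 0 ≤ b₁) (hb₂ : 0 ≤ b₂) :
    √a₁ * √b₁ + √a₂ * √b₂ ≤ √(a₁ + a₂) * √(b₁ + b₂) := by
  simpa [Fin.sum_univ_two] using Real.sum_sqrt_mul_sqrt_le Finset.univ (f := ![a₁, a₂])
    (g := ![b₁, b₂]) (by simp [Fin.forall_fin_two, *]) (by simp [Fin.forall_fin_two, *])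

namespace Matrix

theorem rank_add_le {m n K : Type*} [Fintype n] [Field K] (A B : Matrix m n K) :
    (A + B).rank ≤ A.rank + B.rank := by
  rw [rank, mulVecLin_add]
  exact (Submodule.finrank_mono (LinearMap.range_add_le _ _)).trans
    (Submodule.finrank_add_le_finrank_add_finrank _ _)

theorem rank_sub_le {m n K : Type*} [Fintype n] [Field K] (A B : Matrix m n K) :
    (A - B).rank ≤ A.rank + B.rank := by
  rw [sub_eq_add_neg, ← neg_one_smul K B]
  calc _ ≤ A.rank + ((-1 : K) • B).rank := rank_add_le _ _
    _ = A.rank + B.rank := by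
      rw [rank_smul_of_mem_nonZeroDivisors _ (mem_nonZeroDivisors_of_ne_zero (by norm_num))]

variable {n : Type*} [Fintype n]

theorem PosSemidef.norm_dotProduct_mulVec_le {M : Matrix n n ℂ} (hM : M.PosSemidef) (x y : n → ℂ) :
    ‖star x ⬝ᵥ M *ᵥ y‖ ≤ √(star x ⬝ᵥ M *ᵥ x).re * √(star y ⬝ᵥ M *ᵥ y).re := by
  let := M.toSeminormedAddCommGroup hM
  let := M.toInnerProductSpace hM
  have hinner (u v : n → ℂ) : inner ℂ u v = star u ⬝ᵥ M *ᵥ v := dotProduct_comm _ _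
  have h := norm_inner_le_norm (𝕜 := ℂ) x y
  rw [@norm_eq_sqrt_re_inner ℂ _ _ _ _ x, @norm_eq_sqrt_re_inner ℂ _ _ _ _ y,
    hinner, hinner, hinner] at h
  exact h

theorem norm_dotProduct_half_sub_mulVec_le {ρ σ : Matrix n n ℂ} (hρ : ρ.PosSemidef)
    (hσ : σ.PosSemidef) (x y : n → ℂ) :
    ‖star x ⬝ᵥ ((1/2 : ℂ) • (ρ - σ)) *ᵥ y‖ ≤
      √(star x ⬝ᵥ ((1/2 : ℂ) • (ρ + σ)) *ᵥ x).re * √(star y ⬝ᵥ ((1/2 : ℂ) • (ρ + σ)) *ᵥ y).re := by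
  have key : ‖star x ⬝ᵥ ρ *ᵥ y - star x ⬝ᵥ σ *ᵥ y‖ ≤
      √((star x ⬝ᵥ ρ *ᵥ x).re + (star x ⬝ᵥ σ *ᵥ x).re) *
        √((star y ⬝ᵥ ρ *ᵥ y).re + (star y ⬝ᵥ σ *ᵥ y).re) :=
    calc _ ≤ ‖star x ⬝ᵥ ρ *ᵥ y‖ + ‖star x ⬝ᵥ σ *ᵥ y‖ := norm_sub_le _ _
      _ ≤ _ := add_le_add (hρ.norm_dotProduct_mulVec_le x y) (hσ.norm_dotProduct_mulVec_le x y)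
      _ ≤ _ := Real.sqrt_mul_sqrt_add_sqrt_mul_sqrt_le (hρ.re_dotProduct_nonneg x)
        (hσ.re_dotProduct_nonneg x) (hρ.re_dotProduct_nonneg y) (hσ.re_dotProduct_nonneg y)
  have half : (√2)⁻¹ * (√2)⁻¹ = (1/2 : ℝ) := by
    rw [← mul_inv, Real.mul_self_sqrt zero_le_two, one_div]
  simp only [smul_mulVec, dotProduct_smul, sub_mulVec, add_mulVec, dotProduct_sub, dotProduct_add,
    smul_eq_mul, norm_mul, Complex.mul_re, Complex.add_re, Complex.add_im]
  norm_num
  rw [mul_mul_mul_comm, half]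
  gcongr

theorem abs_mul_norm_dotProduct_mulVec_le_of_mulVec_eq_smul {ρ σ P : Matrix n n ℂ}
    (hρ : ρ.PosSemidef) (hσ : σ.PosSemidef) (hP : P.IsHermitian) {t : ℝ} {v : n → ℂ}
    (hv : ((1/2 : ℂ) • (ρ - σ)) *ᵥ v = t • v) :
    |t| * ‖star v ⬝ᵥ P *ᵥ v‖ ≤ √(star (P *ᵥ v) ⬝ᵥ ((1/2 : ℂ) • (ρ + σ)) *ᵥ (P *ᵥ v)).re *
      √(star v ⬝ᵥ ((1/2 : ℂ) • (ρ + σ)) *ᵥ v).re := by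
  have hform : star (P *ᵥ v) ⬝ᵥ ((1/2 : ℂ) • (ρ - σ)) *ᵥ v = t * (star v ⬝ᵥ P *ᵥ v) := by
    rw [hv, star_mulVec, hP.eq, dotProduct_smul, ← dotProduct_mulVec, Complex.real_smul]
  calc |t| * ‖star v ⬝ᵥ P *ᵥ v‖ = ‖star (P *ᵥ v) ⬝ᵥ ((1/2 : ℂ) • (ρ - σ)) *ᵥ v‖ := by
        rw [hform, norm_mul, Complex.norm_real, Real.norm_eq_abs]
    _ ≤ _ := norm_dotProduct_half_sub_mulVec_le hρ hσ _ _

variable [DecidableEq n]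

theorem re_dotProduct_mulVec_le_of_le_algebraMap {A : Matrix n n ℂ} {r : ℝ}
    (h : A ≤ algebraMap ℝ (Matrix n n ℂ) r) {v : n → ℂ} (hv : star v ⬝ᵥ v = 1) :
    (star v ⬝ᵥ A *ᵥ v).re ≤ r := by
  have := (le_iff.mp h).re_dotProduct_nonneg v
  rw [Algebra.algebraMap_eq_smul_one, sub_mulVec, smul_mulVec, one_mulVec, dotProduct_sub,
    dotProduct_smul, hv] at this
  simpa using this

theorem PosSemidef.le_algebraMap_re_trace {M : Matrix n n ℂ} (hM : M.PosSemidef) :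
    M ≤ algebraMap ℝ (Matrix n n ℂ) M.trace.re := by
  rw [le_algebraMap_iff_spectrum_le hM.1.isSelfAdjoint, hM.1.spectrum_real_eq_range_eigenvalues]
  rintro _ ⟨i, rfl⟩
  rw [hM.1.trace_eq_sum_eigenvalues]
  simpa using Finset.single_le_sum (fun j _ => hM.eigenvalues_nonneg j) (Finset.mem_univ i)

theorem IsHermitian.star_eigenvectorBasis_dotProduct_self {A : Matrix n n ℂ} (hA : A.IsHermitian)
    (i : n) : star ⇑(hA.eigenvectorBasis i) ⬝ᵥ ⇑(hA.eigenvectorBasis i) = 1 := by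
  rw [dotProduct_comm, ← EuclideanSpace.inner_eq_star_dotProduct,
    inner_self_eq_norm_sq_to_K, hA.eigenvectorBasis.orthonormal.1 i]
  norm_num

theorem IsHermitian.star_eigenvectorUnitary_mul_mul_apply_self {A : Matrix n n ℂ}
    (hA : A.IsHermitian) (P : Matrix n n ℂ) (i : n) :
    (star (hA.eigenvectorUnitary : Matrix n n ℂ) * P * hA.eigenvectorUnitary) i i =
      star ⇑(hA.eigenvectorBasis i) ⬝ᵥ P *ᵥ ⇑(hA.eigenvectorBasis i) := by
  simp only [mul_apply, dotProduct, mulVec, star_apply, Pi.star_apply,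
    IsHermitian.eigenvectorUnitary_apply, Finset.sum_mul, Finset.mul_sum]
  rw [Finset.sum_comm]
  simp only [mul_assoc]

theorem IsHermitian.trace_mul_cfc {A : Matrix n n ℂ} (hA : A.IsHermitian) (P : Matrix n n ℂ)
    (f : ℝ → ℝ) :
    (P * hA.cfc f).trace = ∑ i, (f (hA.eigenvalues i) : ℂ) *
      (star ⇑(hA.eigenvectorBasis i) ⬝ᵥ P *ᵥ ⇑(hA.eigenvectorBasis i)) := by
  rw [IsHermitian.cfc, Unitary.conjStarAlgAut_apply, ← mul_assoc, ← mul_assoc,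
    trace_mul_cycle, ← mul_assoc, trace, Finset.sum_congr rfl]
  intro i _
  rw [diag_apply, mul_diagonal, hA.star_eigenvectorUnitary_mul_mul_apply_self, mul_comm]
  rfl

theorem IsHermitian.re_trace_mul_cfc_le {A : Matrix n n ℂ} (hA : A.IsHermitian)
    (P : Matrix n n ℂ) {f : ℝ → ℝ} (hf : f 0 = 0) {c : ℝ}
    (hc : ∀ i, hA.eigenvalues i ≠ 0 →
      f (hA.eigenvalues i) *
        (star ⇑(hA.eigenvectorBasis i) ⬝ᵥ P *ᵥ ⇑(hA.eigenvectorBasis i)).re ≤ c) :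
    (P * hA.cfc f).trace.re ≤ A.rank * c := by
  classical
  rw [hA.trace_mul_cfc, Complex.re_sum, hA.rank_eq_card_non_zero_eigs, Fintype.card_subtype,
    ← nsmul_eq_mul]
  simp only [Complex.re_ofReal_mul]
  rw [← Finset.sum_filter_of_ne (p := fun i => hA.eigenvalues i ≠ 0)
    fun i _ hi h0 => hi (by rw [h0, hf, zero_mul])]
  exact Finset.sum_le_card_nsmul _ _ _ fun i hi => hc i (Finset.mem_filter.mp hi).2

theorem IsHermitian.cfc_indicator_Ioc_mul_mul_le {A : Matrix n n ℂ} (hA : A.IsHermitian) {δ : ℝ}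
    (hδ : 0 ≤ δ) :
    cfc ((Set.Ioc 0 δ).indicator 1) A * A * cfc ((Set.Ioc 0 δ).indicator 1) A ≤
      algebraMap ℝ (Matrix n n ℂ) δ := by
  have hcont (f : ℝ → ℝ) : ContinuousOn f (spectrum ℝ A) := A.finite_real_spectrum.continuousOn f
  nth_rw 2 [← cfc_id' ℝ A hA.isSelfAdjoint]
  rw [← cfc_mul _ _ A (hcont _) (hcont _), ← cfc_mul _ _ A (hcont _) (hcont _)]
  refine cfc_le_algebraMap _ _ A (fun x _ => ?_) (hcont _) hA.isSelfAdjoint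
  by_cases hx : x ∈ Set.Ioc 0 δ
  · simpa [Set.indicator_of_mem hx] using hx.2
  · simpa [Set.indicator_of_notMem hx] using hδ

theorem abs_le_re_dotProduct_mulVec_of_mulVec_eq_smul {ρ σ : Matrix n n ℂ} (hρ : ρ.PosSemidef)
    (hσ : σ.PosSemidef) {t : ℝ} {v : n → ℂ} (hv1 : star v ⬝ᵥ v = 1)
    (hv : ((1/2 : ℂ) • (ρ - σ)) *ᵥ v = t • v) :
    |t| ≤ (star v ⬝ᵥ ((1/2 : ℂ) • (ρ + σ)) *ᵥ v).re := by
  have := abs_mul_norm_dotProduct_mulVec_le_of_mulVec_eq_smul hρ hσ isHermitian_one hv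
  rwa [one_mulVec, hv1, norm_one, mul_one, Real.mul_self_sqrt] at this
  exact ((hρ.add hσ).smul (by norm_num [Complex.le_def])).re_dotProduct_nonneg v

theorem abs_rpow_mul_re_dotProduct_mulVec_le_sqrt {ρ σ P : Matrix n n ℂ} (hρ : ρ.PosSemidef)
    (hσ : σ.PosSemidef) (hμ : (1/2 : ℂ) • (ρ + σ) ≤ algebraMap ℝ (Matrix n n ℂ) 1)
    (hP : P.IsHermitian) {δ : ℝ}
    (hPμP : P * ((1/2 : ℂ) • (ρ + σ)) * P ≤ algebraMap ℝ (Matrix n n ℂ) δ) {α : ℝ} (hα : 1 ≤ α)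
    {t : ℝ} {v : n → ℂ} (hv1 : star v ⬝ᵥ v = 1) (hv : ((1/2 : ℂ) • (ρ - σ)) *ᵥ v = t • v) :
    |t| ^ α * (star v ⬝ᵥ P *ᵥ v).re ≤ √δ := by
  have hvμ : (star v ⬝ᵥ ((1/2 : ℂ) • (ρ + σ)) *ᵥ v).re ≤ 1 :=
    re_dotProduct_mulVec_le_of_le_algebraMap hμ hv1
  have hPvμ : (star (P *ᵥ v) ⬝ᵥ ((1/2 : ℂ) • (ρ + σ)) *ᵥ (P *ᵥ v)).re ≤ δ := by
    rw [star_mulVec, hP.eq, ← dotProduct_mulVec, mulVec_mulVec, mulVec_mulVec]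
    exact re_dotProduct_mulVec_le_of_le_algebraMap hPμP hv1
  have ht1 : |t| ≤ 1 := (abs_le_re_dotProduct_mulVec_of_mulVec_eq_smul hρ hσ hv1 hv).trans hvμ
  calc |t| ^ α * (star v ⬝ᵥ P *ᵥ v).re ≤ |t| ^ α * ‖star v ⬝ᵥ P *ᵥ v‖ := by
        gcongr
        exact Complex.re_le_norm _
    _ ≤ |t| * ‖star v ⬝ᵥ P *ᵥ v‖ := by
        gcongr
        simpa using Real.rpow_le_rpow_of_exponent_ge' (abs_nonneg t) ht1 zero_le_one hα
    _ ≤ √δ * √1 := by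
        refine (abs_mul_norm_dotProduct_mulVec_le_of_mulVec_eq_smul hρ hσ hP hv).trans ?_
        gcongr
    _ = √δ := by rw [Real.sqrt_one, mul_one]

end Matrix

theorem suppProj_sub_suppProj {N : ℕ} {A : Matrix (Fin N) (Fin N) ℂ} (hA : A.IsHermitian) {δ : ℝ}
    (hδ : 0 ≤ δ) : suppProj hA 0 - suppProj hA δ = cfc ((Set.Ioc 0 δ).indicator 1) A := by
  have hcont (f : ℝ → ℝ) : ContinuousOn f (spectrum ℝ A) := A.finite_real_spectrum.continuousOn f
  rw [suppProj, suppProj, ← hA.cfc_eq, ← hA.cfc_eq, ← cfc_sub _ _ A (hcont _) (hcont _)]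
  refine cfc_congr fun x _ => ?_
  simp only [Set.indicator_apply, Set.mem_Ioc, Pi.one_apply, ← not_lt]
  split_ifs <;> grind

/-- For density operators `ρ, σ` of rank at most `r`, `ν = (ρ−σ)/2`, `μ = (ρ+σ)/2`,
`Π` the support projection of `μ` and `Π_δ` its `δ`-support projection, and `α ≥ 1`:
`tr((Π − Π_δ)|ν|^α) ≤ 2 r √δ`. -/
theorem trace_truncated_support_abs_pow_le {N r : ℕ} {ρ σ : Matrix (Fin N) (Fin N) ℂ}
    (hρ : ρ.PosSemidef) (hσ : σ.PosSemidef)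
    (hρ1 : ρ.trace = 1) (hσ1 : σ.trace = 1)
    (hrρ : ρ.rank ≤ r) (hrσ : σ.rank ≤ r)
    (hν : ((1/2 : ℂ) • (ρ - σ)).IsHermitian)
    (hμ : ((1/2 : ℂ) • (ρ + σ)).IsHermitian)
    {δ : ℝ} (hδ : 0 < δ) {α : ℝ} (hα : 1 ≤ α) :
    (((suppProj hμ 0 - suppProj hμ δ) * absPow hν α).trace).re ≤
      2 * r * Real.sqrt δ := by
  have hμ1 : (1/2 : ℂ) • (ρ + σ) ≤ algebraMap ℝ _ 1 := by
    have h :=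
      ((hρ.add hσ).smul (by norm_num [Complex.le_def] : (0 : ℂ) ≤ 1/2)).le_algebraMap_re_trace
    rwa [trace_smul, trace_add, hρ1, hσ1, show ((1/2 : ℂ) • (1 + 1 : ℂ)).re = 1 by norm_num] at h
  have hrank : ((1/2 : ℂ) • (ρ - σ)).rank ≤ 2 * r := by
    rw [rank_smul_of_mem_nonZeroDivisors _ (mem_nonZeroDivisors_of_ne_zero (by norm_num))]
    exact (rank_sub_le ρ σ).trans (by omega)
  rw [suppProj_sub_suppProj hμ hδ.le, absPow]
  calc _ ≤ ((1/2 : ℂ) • (ρ - σ)).rank * √δ :=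
        hν.re_trace_mul_cfc_le _ (by simp [Real.zero_rpow (by linarith : α ≠ 0)]) fun i _ =>
          abs_rpow_mul_re_dotProduct_mulVec_le_sqrt hρ hσ hμ1 IsSelfAdjoint.cfc
            (hμ.cfc_indicator_Ioc_mul_mul_le hδ.le) hα (hν.star_eigenvectorBasis_dotProduct_self i)
            (hν.mulVec_eigenvectorBasis i)
    _ ≤ 2 * r * √δ := by gcongr; exact_mod_cast hrank
end

section
/- Let ρ and σ be density operators of rank at most r, let ν = (ρ−σ)/2, μ = (ρ+σ)/2, let Π be the projection onto the support of μ and Π_δ the projection onto the span of eigenvectors of μ with eigenvalue > δ. Then for 0 < α < 1, tr((Π − Π_δ)|ν|^α) ≤ 2 r δ^(α/2). -/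
open Matrix
open scoped ComplexOrder

/-! With `μ = (ρ + σ)/2` and `ν = (ρ - σ)/2` one has
`μ - ν² = μ² + (ρ - ρ²)/2 + (σ - σ²)/2 ≥ 0`, because a density matrix satisfies `ρ² ≤ ρ`.
For a unit eigenvector `v` of `μ` with eigenvalue `λ`, Jensen's inequality for the concave map
`t ↦ t ^ (α/2)` against the spectral measure of `ν` in the state `v` gives
`⟨v, |ν|^α v⟩ ≤ ⟨v, ν² v⟩ ^ (α/2) ≤ λ ^ (α/2)`. The trace is the sum of these numbers over the
eigenvalues `λ ∈ (0, δ]` of `μ`, and there are at most `rank μ ≤ rank ρ + rank σ ≤ 2r` of them. -/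

lemma Real.sum_mul_abs_rpow_le_rpow_sum_mul_sq {ι : Type*} (s : Finset ι) {w x : ι → ℝ}
    (hw : ∀ i ∈ s, 0 ≤ w i) (hw1 : ∑ i ∈ s, w i = 1) {α : ℝ} (hα0 : 0 ≤ α) (hα2 : α ≤ 2) :
    ∑ i ∈ s, w i * |x i| ^ α ≤ (∑ i ∈ s, w i * x i ^ 2) ^ (α / 2) := by
  have habs (i : ι) : |x i| ^ α = (x i ^ 2) ^ (α / 2) := by
    rw [← sq_abs, ← Real.rpow_natCast, ← Real.rpow_mul (abs_nonneg _)]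
    ring_nf
  simpa only [habs, smul_eq_mul] using
    (Real.concaveOn_rpow (by linarith) (by linarith)).le_map_sum hw hw1
      fun i _ => Set.mem_Ici.mpr (sq_nonneg (x i))

lemma Matrix.rank_add_le_s5 {m n K : Type*} [Fintype n] [Field K] (A B : Matrix m n K) :
    (A + B).rank ≤ A.rank + B.rank := by
  rw [rank, rank, rank, mulVecLin_add]
  exact (Submodule.finrank_mono (LinearMap.range_add_le _ _)).trans
    (Submodule.finrank_add_le_finrank_add_finrank _ _)

namespace Matrix

variable {n 𝕜 : Type*} [Fintype n] [RCLike 𝕜]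

lemma posSemidef_half_add_sub_sq {ρ σ : Matrix n n 𝕜} (hρ : ρ.IsHermitian) (hσ : σ.IsHermitian)
    (hρ' : (ρ - ρ * ρ).PosSemidef) (hσ' : (σ - σ * σ).PosSemidef) :
    ((1/2 : 𝕜) • (ρ + σ) - ((1/2 : 𝕜) • (ρ - σ)) * ((1/2 : 𝕜) • (ρ - σ))).PosSemidef := by
  have hhalf : (0 : 𝕜) ≤ 1 / 2 := by positivity
  have hstar : star (1/2 : 𝕜) = 1/2 := by simp
  have hid : (1/2 : 𝕜) • (ρ + σ) - ((1/2 : 𝕜) • (ρ - σ)) * ((1/2 : 𝕜) • (ρ - σ)) =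
      ((1/2 : 𝕜) • (ρ + σ))ᴴ * ((1/2 : 𝕜) • (ρ + σ)) +
        (1/2 : 𝕜) • (ρ - ρ * ρ) + (1/2 : 𝕜) • (σ - σ * σ) := by
    rw [conjTranspose_smul, conjTranspose_add, hρ.eq, hσ.eq, hstar]
    simp only [smul_mul_smul_comm, Matrix.sub_mul, Matrix.mul_sub, Matrix.add_mul, Matrix.mul_add]
    module
  rw [hid]
  exact ((posSemidef_conjTranspose_mul_self _).add (hρ'.smul hhalf)).add (hσ'.smul hhalf)

variable [DecidableEq n]

namespace IsHermitian

variable {A : Matrix n n 𝕜} (hA : A.IsHermitian)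

lemma cfc_one : hA.cfc (fun _ => 1) = 1 := by
  rw [← hA.cfc_eq]
  exact cfc_const_one ℝ A

lemma cfc_sub (f g : ℝ → ℝ) : hA.cfc f - hA.cfc g = hA.cfc (f - g) := by
  simp only [IsHermitian.cfc, ← map_sub, diagonal_sub]
  congr 2
  funext i
  simp

lemma mul_self_eq_cfc : A * A = hA.cfc (fun x => x ^ 2) := by
  rw [← hA.cfc_eq, cfc_pow_id (R := ℝ) A 2 hA.isSelfAdjoint, sq]

lemma sub_mul_self_eq_cfc : A - A * A = hA.cfc (fun x => x - x ^ 2) := by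
  rw [← hA.cfc_eq, _root_.cfc_sub (fun x => x) (fun x => x ^ 2) A, cfc_id' ℝ A hA.isSelfAdjoint,
    cfc_pow_id (R := ℝ) A 2 hA.isSelfAdjoint, sq]

lemma posSemidef_cfc {f : ℝ → ℝ} (hf : ∀ i, 0 ≤ f (hA.eigenvalues i)) :
    (hA.cfc f).PosSemidef := by
  have hD : (diagonal (RCLike.ofReal ∘ f ∘ hA.eigenvalues) : Matrix n n 𝕜).PosSemidef :=
    PosSemidef.diagonal fun i => by simpa using hf i
  rw [IsHermitian.cfc, Unitary.conjStarAlgAut_apply, star_eq_conjTranspose]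
  exact hD.mul_mul_conjTranspose_same (hA.eigenvectorUnitary : Matrix n n 𝕜)

lemma star_eigenvectorBasis_dotProduct_self_s5 (i : n) :
    star ⇑(hA.eigenvectorBasis i) ⬝ᵥ ⇑(hA.eigenvectorBasis i) = 1 := by
  rw [dotProduct_comm, ← EuclideanSpace.inner_eq_star_dotProduct, inner_self_eq_norm_sq_to_K,
    hA.eigenvectorBasis.orthonormal.1 i]
  simp

lemma dotProduct_cfc_mulVec (f : ℝ → ℝ) (u : n → 𝕜) :
    star u ⬝ᵥ (hA.cfc f *ᵥ u) = ((∑ j, ‖(star (hA.eigenvectorUnitary : Matrix n n 𝕜) *ᵥ u) j‖ ^ 2 *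
      f (hA.eigenvalues j) : ℝ) : 𝕜) := by
  set c := star (hA.eigenvectorUnitary : Matrix n n 𝕜) *ᵥ u
  have hc : star u ᵥ* (hA.eigenvectorUnitary : Matrix n n 𝕜) = star c := by
    rw [star_mulVec, ← star_eq_conjTranspose, star_star]
  rw [IsHermitian.cfc, Unitary.conjStarAlgAut_apply, ← mulVec_mulVec, ← mulVec_mulVec,
    dotProduct_mulVec, hc]
  simp only [dotProduct, mulVec_diagonal, Pi.star_apply, Function.comp_apply]
  push_cast
  refine Finset.sum_congr rfl fun j _ => ?_
  rw [mul_left_comm, RCLike.star_def, RCLike.conj_mul, mul_comm]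

lemma re_dotProduct_cfc_mulVec_nonneg {f : ℝ → ℝ} (hf : ∀ x, 0 ≤ f x) (u : n → 𝕜) :
    0 ≤ RCLike.re (star u ⬝ᵥ (hA.cfc f *ᵥ u)) := by
  rw [hA.dotProduct_cfc_mulVec, RCLike.ofReal_re]
  exact Finset.sum_nonneg fun j _ => mul_nonneg (sq_nonneg _) (hf _)

lemma re_dotProduct_cfc_abs_rpow_mulVec_le {u : n → 𝕜} (hu : star u ⬝ᵥ u = 1) {α : ℝ}
    (hα0 : 0 ≤ α) (hα2 : α ≤ 2) :
    RCLike.re (star u ⬝ᵥ (hA.cfc (fun x => |x| ^ α) *ᵥ u)) ≤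
      RCLike.re (star u ⬝ᵥ ((A * A) *ᵥ u)) ^ (α / 2) := by
  have hw1 := hA.dotProduct_cfc_mulVec (fun _ => 1) u
  rw [hA.cfc_one, one_mulVec, hu] at hw1
  simp only [mul_one] at hw1
  rw [hA.mul_self_eq_cfc, hA.dotProduct_cfc_mulVec, hA.dotProduct_cfc_mulVec, RCLike.ofReal_re,
    RCLike.ofReal_re]
  exact Real.sum_mul_abs_rpow_le_rpow_sum_mul_sq _ (fun j _ => by positivity)
    (by exact_mod_cast hw1.symm) hα0 hα2

lemma re_dotProduct_cfc_abs_rpow_eigenvectorBasis_le {M : Matrix n n 𝕜} (hM : M.IsHermitian)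
    (hAM : (M - A * A).PosSemidef) (i : n) {α : ℝ} (hα0 : 0 ≤ α) (hα2 : α ≤ 2) :
    RCLike.re (star ⇑(hM.eigenvectorBasis i) ⬝ᵥ
      (hA.cfc (fun x => |x| ^ α) *ᵥ ⇑(hM.eigenvectorBasis i))) ≤ hM.eigenvalues i ^ (α / 2) := by
  set v := ⇑(hM.eigenvectorBasis i)
  have hsq_nonneg : 0 ≤ RCLike.re (star v ⬝ᵥ ((A * A) *ᵥ v)) := by
    rw [hA.mul_self_eq_cfc]
    exact hA.re_dotProduct_cfc_mulVec_nonneg (fun x => sq_nonneg x) v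
  have hsq_le : RCLike.re (star v ⬝ᵥ ((A * A) *ᵥ v)) ≤ hM.eigenvalues i := by
    have := RCLike.nonneg_iff.mp (hAM.dotProduct_mulVec_nonneg v) |>.1
    rw [sub_mulVec, dotProduct_sub, map_sub, sub_nonneg] at this
    exact this.trans_eq (hM.eigenvalues_eq i).symm
  exact (hA.re_dotProduct_cfc_abs_rpow_mulVec_le (hM.star_eigenvectorBasis_dotProduct_self_s5 i)
    hα0 hα2).trans (Real.rpow_le_rpow hsq_nonneg hsq_le (by linarith))

lemma re_trace_cfc_mul (f : ℝ → ℝ) (B : Matrix n n 𝕜) :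
    RCLike.re (hA.cfc f * B).trace = ∑ i, f (hA.eigenvalues i) *
      RCLike.re (star ⇑(hA.eigenvectorBasis i) ⬝ᵥ (B *ᵥ ⇑(hA.eigenvectorBasis i))) := by
  rw [IsHermitian.cfc, Unitary.conjStarAlgAut_apply, Matrix.mul_assoc, trace_mul_cycle,
    trace_mul_comm, trace, map_sum]
  refine Finset.sum_congr rfl fun i _ => ?_
  rw [diag_apply, diagonal_mul, Function.comp_apply, Function.comp_apply, RCLike.re_ofReal_mul]
  congr 2
  simp only [mul_apply, mulVec, dotProduct, star_apply, Pi.star_apply, eigenvectorUnitary_apply,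
    Finset.sum_mul, Finset.mul_sum]
  rw [Finset.sum_comm]
  exact Finset.sum_congr rfl fun _ _ => Finset.sum_congr rfl fun _ _ => by ring

end IsHermitian

lemma PosSemidef.sub_mul_self_of_trace_eq_one {A : Matrix n n 𝕜} (hA : A.PosSemidef)
    (htr : A.trace = 1) : (A - A * A).PosSemidef := by
  have hsum : ∑ i, hA.1.eigenvalues i = 1 := by
    exact_mod_cast hA.1.trace_eq_sum_eigenvalues.symm.trans htr
  rw [hA.1.sub_mul_self_eq_cfc]
  refine hA.1.posSemidef_cfc fun i => ?_
  have hle : hA.1.eigenvalues i ≤ 1 :=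
    hsum ▸ Finset.single_le_sum (fun j _ => hA.eigenvalues_nonneg j) (Finset.mem_univ i)
  nlinarith [hA.eigenvalues_nonneg i]

end Matrix

lemma suppProj_zero_sub_suppProj {N : ℕ} {A : Matrix (Fin N) (Fin N) ℂ} (hA : A.IsHermitian)
    {δ : ℝ} (hδ : 0 ≤ δ) : suppProj hA 0 - suppProj hA δ = hA.cfc ((Set.Ioc 0 δ).indicator 1) := by
  rw [suppProj, suppProj, hA.cfc_sub]
  congr 1
  funext x
  simp only [Pi.sub_apply, Set.indicator, Set.mem_Ioc, Pi.one_apply]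
  split_ifs <;> grind

/-- For density operators `ρ, σ` of rank at most `r`, `ν = (ρ−σ)/2`, `μ = (ρ+σ)/2`,
`Π` the support projection of `μ` and `Π_δ` its `δ`-support projection, and `0 < α < 1`:
`tr((Π − Π_δ)|ν|^α) ≤ 2 r δ^(α/2)`. -/
theorem trace_truncated_support_abs_pow_le' {N r : ℕ} {ρ σ : Matrix (Fin N) (Fin N) ℂ}
    (hρ : ρ.PosSemidef) (hσ : σ.PosSemidef)
    (hρ1 : ρ.trace = 1) (hσ1 : σ.trace = 1)
    (hrρ : ρ.rank ≤ r) (hrσ : σ.rank ≤ r)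
    (hν : ((1/2 : ℂ) • (ρ - σ)).IsHermitian)
    (hμ : ((1/2 : ℂ) • (ρ + σ)).IsHermitian)
    {δ : ℝ} (hδ : 0 < δ) {α : ℝ} (hα0 : 0 < α) (hα1 : α < 1) :
    (((suppProj hμ 0 - suppProj hμ δ) * absPow hν α).trace).re ≤
      2 * r * δ ^ (α / 2) := by
  set μ := (1/2 : ℂ) • (ρ + σ)
  have hνμ := posSemidef_half_add_sub_sq hρ.1 hσ.1 (hρ.sub_mul_self_of_trace_eq_one hρ1)
    (hσ.sub_mul_self_of_trace_eq_one hσ1)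
  have hrank : μ.rank ≤ 2 * r := by
    rw [rank_smul_of_mem_nonZeroDivisors _ (mem_nonZeroDivisors_of_ne_zero (by norm_num))]
    linarith [rank_add_le_s5 ρ σ]
  rw [suppProj_zero_sub_suppProj hμ hδ.le, ← RCLike.re_to_complex, hμ.re_trace_cfc_mul]
  calc _ ≤ ∑ i, if hμ.eigenvalues i ≠ 0 then δ ^ (α / 2) else 0 := by
        refine Finset.sum_le_sum fun i _ => ?_
        by_cases hi : hμ.eigenvalues i ∈ Set.Ioc 0 δ
        · rw [Set.indicator_of_mem hi, Pi.one_apply, one_mul, if_pos hi.1.ne']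
          calc _ ≤ hμ.eigenvalues i ^ (α / 2) :=
                hν.re_dotProduct_cfc_abs_rpow_eigenvectorBasis_le hμ hνμ i hα0.le (by linarith)
            _ ≤ δ ^ (α / 2) := Real.rpow_le_rpow hi.1.le hi.2 (by positivity)
        · rw [Set.indicator_of_notMem hi, zero_mul]
          split_ifs <;> positivity
    _ = μ.rank * δ ^ (α / 2) := by
        rw [Finset.sum_ite, Finset.sum_const, Finset.sum_const_zero, hμ.rank_eq_card_non_zero_eigs,
          Fintype.card_subtype, nsmul_eq_mul, add_zero]
    _ ≤ 2 * r * δ ^ (α / 2) := by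
        gcongr
        exact_mod_cast hrank
end

section
/- Let A be a positive semidefinite operator on a finite-dimensional Hilbert space with operator norm at most 1, with spectral decomposition A = Σ_j λ_j |ψ_j⟩⟨ψ_j|. Fix δ, ε ∈ (0, 1/10] with 32ε² ≤ δ, and let Q: [0,1] → ℝ satisfy: Q(x)² x ≤ δε² for x ∈ (0, δ]; (√δ/(2√x) − ε)²(1−ε)² ≤ Q(x)² ≤ (√δ/(2√x) + ε)² for x ∈ (2δ, 1]; and 0 ≤ Q(x)²x ≤ δ/4 + ε² + √δ·ε for x ∈ (δ, 2δ]. Then (δ/4·(1−2ε) − √δ·ε)·Π_{2δ} ≤ A Q(A)² ≤ (δ/4 + ε² + √δ·ε)·Π₀, where Π_δ' denotes the projection onto eigenvectors of A with eigenvalue > δ' and Π₀ the projection onto the support of A. -/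
/-! Both sides are functions of `A`, so by monotonicity of the functional calculus it suffices to
compare `x Q(x)²` with the thresholded constants at each eigenvalue `x ∈ [0, 1]`. Only the range
`(2δ, 1]` needs an argument: there, multiplying the bounds on `Q(x)²` by `x` turns
`(√δ / (2√x) ± ε)²` into `(√δ / 2 ± ε√x)²`, and `√x ≤ 1` together with `4ε ≤ √δ`
(from `32ε² ≤ δ`) yields the constants. -/

open Matrix
open scoped ComplexOrder

namespace Matrix.IsHermitian

variable {𝕜 n : Type*} [RCLike 𝕜] [Fintype n] [DecidableEq n] {A : Matrix n n 𝕜}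

lemma cfc_const_mul (hA : A.IsHermitian) (c : ℝ) (f : ℝ → ℝ) :
    hA.cfc (fun x => c * f x) = (c : 𝕜) • hA.cfc f := by
  rw [← hA.cfc_eq, ← hA.cfc_eq, ← RCLike.real_smul_eq_coe_smul,
    _root_.cfc_const_mul c f A (hf := A.finite_real_spectrum.continuousOn _)]

open scoped MatrixOrder in
lemma posSemidef_cfc_sub_cfc (hA : A.IsHermitian) {f g : ℝ → ℝ}
    (h : ∀ x ∈ spectrum ℝ A, f x ≤ g x) : (hA.cfc g - hA.cfc f).PosSemidef := by
  rw [← hA.cfc_eq, ← hA.cfc_eq, ← Matrix.le_iff]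
  exact cfc_mono h (hf := A.finite_real_spectrum.continuousOn _)
    (hg := A.finite_real_spectrum.continuousOn _)

lemma posSemidef_cfc_sub_smul_cfc (hA : A.IsHermitian) (c : ℝ) {f g : ℝ → ℝ}
    (h : ∀ x ∈ spectrum ℝ A, c * g x ≤ f x) : (hA.cfc f - (c : 𝕜) • hA.cfc g).PosSemidef := by
  rw [← hA.cfc_const_mul]
  exact hA.posSemidef_cfc_sub_cfc h

lemma posSemidef_smul_cfc_sub_cfc (hA : A.IsHermitian) (c : ℝ) {f g : ℝ → ℝ}
    (h : ∀ x ∈ spectrum ℝ A, f x ≤ c * g x) : ((c : 𝕜) • hA.cfc g - hA.cfc f).PosSemidef := by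
  rw [← hA.cfc_const_mul]
  exact hA.posSemidef_cfc_sub_cfc h

end Matrix.IsHermitian

open scoped MatrixOrder in
lemma Matrix.PosSemidef.nonneg_of_mem_spectrum {𝕜 n : Type*} [RCLike 𝕜] [Fintype n]
    [DecidableEq n] {A : Matrix n n 𝕜} (hA : A.PosSemidef) {x : ℝ} (hx : x ∈ spectrum ℝ A) :
    0 ≤ x :=
  spectrum_nonneg_of_nonneg (Matrix.nonneg_iff_posSemidef.mpr hA) hx

open scoped Matrix.Norms.L2Operator in
lemma le_opNorm_of_mem_spectrum {N : ℕ} {A : Matrix (Fin N) (Fin N) ℂ} {x : ℝ}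
    (hx : x ∈ spectrum ℝ A) : x ≤ opNorm A := by
  -- `‖1‖ = 1` fails for `N = 0`, so `spectrum.norm_le_norm_of_mem` does not apply
  have hone : ‖(1 : Matrix (Fin N) (Fin N) ℂ)‖ ≤ 1 := by
    rw [← l2_opNorm_toEuclideanCLM, map_one]
    exact ContinuousLinearMap.norm_id_le
  calc x ≤ ‖x‖ := Real.le_norm_self x
    _ ≤ ‖A‖ * ‖(1 : Matrix (Fin N) (Fin N) ℂ)‖ := spectrum.norm_le_norm_mul_of_mem hx
    _ ≤ opNorm A := mul_le_of_le_one_right (norm_nonneg _) hone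

lemma mul_sq_div_two_sqrt_add {t : ℝ} (ht : 0 < t) (a b : ℝ) :
    t * (a / (2 * √t) + b) ^ 2 = (a / 2 + b * √t) ^ 2 := by
  field_simp
  rw [Real.sq_sqrt ht.le]

lemma four_mul_le_sqrt {δ ε : ℝ} (h : 32 * ε ^ 2 ≤ δ) : 4 * ε ≤ √δ :=
  Real.le_sqrt_of_sq_le (by nlinarith)

section Thresholds

variable {δ ε t : ℝ} {Q : ℝ → ℝ}

lemma lower_threshold_le_mul_sq (hδ : 0 < δ) (hε : 0 ≤ ε) (hε1 : ε ≤ 1)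
    (hδε : 32 * ε ^ 2 ≤ δ) (ht : t ∈ Set.Ioc (2 * δ) 1)
    (hQ : (√δ / (2 * √t) - ε) ^ 2 * (1 - ε) ^ 2 ≤ Q t ^ 2) :
    δ / 4 * (1 - 2 * ε) - √δ * ε ≤ t * Q t ^ 2 := by
  have ht0 : 0 < t := by linarith [ht.1]
  have hsδ : 4 * ε ≤ √δ := four_mul_le_sqrt hδε
  have hst : ε * √t ≤ ε := mul_le_of_le_one_right hε (Real.sqrt_le_one.mpr ht.2)
  calc δ / 4 * (1 - 2 * ε) - √δ * ε ≤ (√δ / 2 - ε) ^ 2 * (1 - ε) ^ 2 := by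
        -- the difference is `δε²/4 + √δ ε² (2 - ε) + ε² (1 - ε)²`
        have hsq : √δ ^ 2 = δ := Real.sq_sqrt hδ.le
        nlinarith [mul_nonneg (mul_nonneg (Real.sqrt_nonneg δ) (sq_nonneg ε))
            (by linarith : 0 ≤ 2 - ε),
          mul_nonneg (sq_nonneg ε) (sq_nonneg (1 - ε)), mul_nonneg hδ.le (sq_nonneg ε)]
    _ ≤ (√δ / 2 - ε * √t) ^ 2 * (1 - ε) ^ 2 := by gcongr; linarith
    _ = t * (√δ / (2 * √t) - ε) ^ 2 * (1 - ε) ^ 2 := by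
        rw [sub_eq_add_neg (√δ / (2 * √t)), mul_sq_div_two_sqrt_add ht0]; ring
    _ ≤ t * Q t ^ 2 := by rw [mul_assoc]; gcongr

lemma mul_sq_le_upper_threshold (hδ : 0 < δ) (hε : 0 ≤ ε) (ht : t ∈ Set.Ioc (2 * δ) 1)
    (hQ : Q t ^ 2 ≤ (√δ / (2 * √t) + ε) ^ 2) :
    t * Q t ^ 2 ≤ δ / 4 + ε ^ 2 + √δ * ε := by
  have ht0 : 0 < t := by linarith [ht.1]
  have hst : ε * √t ≤ ε := mul_le_of_le_one_right hε (Real.sqrt_le_one.mpr ht.2)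
  calc t * Q t ^ 2 ≤ t * (√δ / (2 * √t) + ε) ^ 2 := by gcongr
    _ = (√δ / 2 + ε * √t) ^ 2 := mul_sq_div_two_sqrt_add ht0 _ _
    _ ≤ (√δ / 2 + ε) ^ 2 := by gcongr
    _ = δ / 4 + ε ^ 2 + √δ * ε := by rw [add_sq, div_pow, Real.sq_sqrt hδ.le]; ring

lemma lower_threshold_mul_indicator_le (hδ : 0 < δ) (hε : 0 ≤ ε) (hε1 : ε ≤ 1)
    (hδε : 32 * ε ^ 2 ≤ δ)
    (hQ : ∀ x ∈ Set.Ioc (2 * δ) 1, (√δ / (2 * √x) - ε) ^ 2 * (1 - ε) ^ 2 ≤ Q x ^ 2)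
    (ht : t ∈ Set.Icc 0 1) :
    (δ / 4 * (1 - 2 * ε) - √δ * ε) * (if 2 * δ < t then 1 else 0) ≤ t * Q t ^ 2 := by
  split_ifs with h2δ
  · rw [mul_one]
    exact lower_threshold_le_mul_sq hδ hε hε1 hδε ⟨h2δ, ht.2⟩ (hQ t ⟨h2δ, ht.2⟩)
  · rw [mul_zero]
    exact mul_nonneg ht.1 (sq_nonneg _)

lemma mul_sq_le_upper_threshold_mul_indicator (hδ : 0 < δ) (hδ1 : δ ≤ 1) (hε : 0 ≤ ε)
    (hQ1 : ∀ x ∈ Set.Ioc 0 δ, Q x ^ 2 * x ≤ δ * ε ^ 2)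
    (hQ2 : ∀ x ∈ Set.Ioc (2 * δ) 1, Q x ^ 2 ≤ (√δ / (2 * √x) + ε) ^ 2)
    (hQ3 : ∀ x ∈ Set.Ioc δ (2 * δ), Q x ^ 2 * x ≤ δ / 4 + ε ^ 2 + √δ * ε)
    (ht : t ∈ Set.Icc 0 1) :
    t * Q t ^ 2 ≤ (δ / 4 + ε ^ 2 + √δ * ε) * (if 0 < t then 1 else 0) := by
  split_ifs with ht0
  · rw [mul_one]
    rcases le_or_gt t δ with htδ | htδ
    · have hlow := hQ1 t ⟨ht0, htδ⟩
      nlinarith [mul_nonneg (Real.sqrt_nonneg δ) hε]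
    rcases le_or_gt t (2 * δ) with ht2δ | ht2δ
    · linarith [hQ3 t ⟨htδ, ht2δ⟩]
    · exact mul_sq_le_upper_threshold hδ hε ⟨ht2δ, ht.2⟩ (hQ2 t ⟨ht2δ, ht.2⟩)
  · rw [mul_zero, le_antisymm (not_lt.mp ht0) ht.1, zero_mul]

end Thresholds

/-- Eigenvalue threshold projector bounds: under the stated pointwise bounds on `Q`,
`(δ/4 (1−2ε) − √δ ε) Π_{2δ} ≤ A Q(A)² ≤ (δ/4 + ε² + √δ ε) Π₀` in the Loewner order,
where `Π_{δ'}` projects onto eigenvectors of `A` with eigenvalue `> δ'`. -/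
theorem eigenvalue_threshold_projector_bounds {N : ℕ} {A : Matrix (Fin N) (Fin N) ℂ}
    (hA : A.PosSemidef) (hA1 : opNorm A ≤ 1)
    {δ ε : ℝ} (hδ : δ ∈ Set.Ioc 0 (1/10 : ℝ)) (hε : ε ∈ Set.Ioc 0 (1/10 : ℝ))
    (hδε : 32 * ε ^ 2 ≤ δ)
    (Q : ℝ → ℝ)
    (hQ1 : ∀ x ∈ Set.Ioc 0 δ, (Q x) ^ 2 * x ≤ δ * ε ^ 2)
    (hQ2 : ∀ x ∈ Set.Ioc (2*δ) 1,
      (Real.sqrt δ / (2 * Real.sqrt x) - ε) ^ 2 * (1 - ε) ^ 2 ≤ (Q x) ^ 2 ∧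
        (Q x) ^ 2 ≤ (Real.sqrt δ / (2 * Real.sqrt x) + ε) ^ 2)
    (hQ3 : ∀ x ∈ Set.Ioc δ (2*δ),
      0 ≤ (Q x) ^ 2 * x ∧ (Q x) ^ 2 * x ≤ δ/4 + ε ^ 2 + Real.sqrt δ * ε) :
    (hA.1.cfc (fun x => x * (Q x) ^ 2) -
        ((δ/4 * (1 - 2*ε) - Real.sqrt δ * ε : ℝ) : ℂ) •
          hA.1.cfc (fun x => if 2*δ < x then 1 else 0)).PosSemidef ∧
      (((δ/4 + ε ^ 2 + Real.sqrt δ * ε : ℝ) : ℂ) •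
          hA.1.cfc (fun x => if 0 < x then 1 else 0) -
        hA.1.cfc (fun x => x * (Q x) ^ 2)).PosSemidef := by
  obtain ⟨hδ0, hδ1⟩ := hδ
  obtain ⟨hε0, hε1⟩ := hε
  have hspec : ∀ x ∈ spectrum ℝ A, x ∈ Set.Icc 0 1 := fun x hx =>
    ⟨hA.nonneg_of_mem_spectrum hx, (le_opNorm_of_mem_spectrum hx).trans hA1⟩
  constructor
  · exact hA.1.posSemidef_cfc_sub_smul_cfc _ fun x hx =>
      lower_threshold_mul_indicator_le hδ0 hε0.le (by linarith) hδε (fun y hy => (hQ2 y hy).1)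
        (hspec x hx)
  · exact hA.1.posSemidef_smul_cfc_sub_cfc _ fun x hx =>
      mul_sq_le_upper_threshold_mul_indicator hδ0 (by linarith) hε0.le hQ1
        (fun y hy => (hQ2 y hy).2) (fun y hy => (hQ3 y hy).2) (hspec x hx)
end
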